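/- Let G be a finite multidigraph that is k-out-regular for a positive integer k, with an edge e* = (w*, v*). Let τ̄ : K(𝓛G, e*) → cok ψ and σ̄ : cok ψ → K(𝓛G, e*) be the homomorphisms induced by τ and σ respectively. Then the composition σ̄ ∘ τ̄ equals multiplication by k on K(𝓛G, e*); in particular, for every edge e of G, the class of σ(τ(e)) in K(𝓛G, e*) equals k times the class of e. -/

import Mathlib

open Finsupp

/-- The Laplacian of a multidigraph with edge tail map `t` and head map `h`,
as a linear endomorphism of the free abelian group on the vertices. -/
noncomputable def lap {V E : Type*} [Fintype E] [DecidableEq V] (t h : E → V) :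
    (V →₀ ℤ) →ₗ[ℤ] (V →₀ ℤ) :=
  Finsupp.lift (V →₀ ℤ) ℤ V fun v =>
    ∑ e : E, if t e = v then Finsupp.single (h e) (1 : ℤ) - Finsupp.single v 1 else 0

/-- The modified Laplacian `φ_{G,w}` : sends `v ↦ Δ_G v` for `v ≠ w`, and `w ↦ w`. -/
noncomputable def phiMod {V E : Type*} [Fintype E] [DecidableEq V] (t h : E → V) (w : V) :
    (V →₀ ℤ) →ₗ[ℤ] (V →₀ ℤ) :=
  Finsupp.lift (V →₀ ℤ) ℤ V fun v =>
    if v = w then Finsupp.single w 1 else lap t h (Finsupp.single v 1)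

/-- Edges of the directed line graph: pairs `(e, f)` with `e⁺ = f⁻`. -/
def LineEdge {V E : Type*} (t h : E → V) : Type _ := {p : E × E // h p.1 = t p.2}

instance {V E : Type*} [Fintype E] [DecidableEq V] (t h : E → V) :
    Fintype (LineEdge t h) := by
  unfold LineEdge; infer_instance

/-- in-degree of a vertex -/
def indeg {V E : Type*} [Fintype E] [DecidableEq V] (h : E → V) (v : V) : ℕ :=
  (Finset.univ.filter fun e => h e = v).card

/-- out-degree of a vertex -/
def outdeg {V E : Type*} [Fintype E] [DecidableEq V] (t : E → V) (v : V) : ℕ :=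
  (Finset.univ.filter fun e => t e = v).card

/-- The modified target map `τ`: `e ↦ e⁺` for `e ≠ e*`, `e* ↦ 0`. -/
noncomputable def tau {V E : Type*} [DecidableEq E] (h : E → V) (estar : E) :
    (E →₀ ℤ) →ₗ[ℤ] (V →₀ ℤ) :=
  Finsupp.lift (V →₀ ℤ) ℤ E fun e =>
    if e = estar then 0 else Finsupp.single (h e) 1

/-- The map `ρ`: `e ↦ Δ_G(w*) − v* − w* + e⁺` for `e ≠ e*`, `e* ↦ 0`,
where `w* = t e*` and `v* = h e*`. -/
noncomputable def rho {V E : Type*} [Fintype E] [DecidableEq V] [DecidableEq E]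
    (t h : E → V) (estar : E) : (E →₀ ℤ) →ₗ[ℤ] (V →₀ ℤ) :=
  Finsupp.lift (V →₀ ℤ) ℤ E fun e =>
    if e = estar then 0 else
      lap t h (Finsupp.single (t estar) 1) - Finsupp.single (h estar) 1
        - Finsupp.single (t estar) 1 + Finsupp.single (h e) 1

/-- The map `ρ₀`: `v ↦ Δ_G(w*) − v* − w* + v`. -/
noncomputable def rho0 {V E : Type*} [Fintype E] [DecidableEq V] (t h : E → V) (estar : E) :
    (V →₀ ℤ) →ₗ[ℤ] (V →₀ ℤ) :=
  Finsupp.lift (V →₀ ℤ) ℤ V fun v =>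
    lap t h (Finsupp.single (t estar) 1) - Finsupp.single (h estar) 1
      - Finsupp.single (t estar) 1 + Finsupp.single v 1

/-- The map `ψ`: `v ↦ Δ_G v` for `v ≠ w*`, and `w* ↦ Δ_G(w*) − v*`. -/
noncomputable def psi {V E : Type*} [Fintype E] [DecidableEq V] (t h : E → V) (estar : E) :
    (V →₀ ℤ) →ₗ[ℤ] (V →₀ ℤ) :=
  Finsupp.lift (V →₀ ℤ) ℤ V fun v =>
    if v = t estar then
      lap t h (Finsupp.single (t estar) 1) - Finsupp.single (h estar) 1
    else lap t h (Finsupp.single v 1)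

/-- The map `σ`: `v ↦ Σ_{e⁻ = v} e`. -/
noncomputable def sigmaMap {V E : Type*} [Fintype E] [DecidableEq V] (t : E → V) :
    (V →₀ ℤ) →ₗ[ℤ] (E →₀ ℤ) :=
  Finsupp.lift (E →₀ ℤ) ℤ V fun v =>
    ∑ e : E, if t e = v then Finsupp.single e (1 : ℤ) else 0

/-!
For `e ≠ e*` the line-graph Laplacian reads `Δ_{𝓛G}(e) = σ(e⁺) - outdeg(e⁺) • e`, so with
out-degree `k` everywhere `σ(τ(e)) ≡ k • e` modulo the image of `φ_{𝓛G,e*}`; for `e = e*` we have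
`τ(e*) = 0` and `k • e* = φ_{𝓛G,e*}(k • e*)`. Both sides being linear, the basis case suffices.
-/

lemma tau_single_self {V E : Type*} [DecidableEq E] (h : E → V) (estar : E) :
    tau h estar (Finsupp.single estar 1) = 0 := by
  simp [tau]

lemma tau_single_of_ne {V E : Type*} [DecidableEq E] (h : E → V) {e estar : E} (he : e ≠ estar) :
    tau h estar (Finsupp.single e 1) = Finsupp.single (h e) 1 := by
  simp [tau, he]

section LineGraph

variable {V E : Type*} [Fintype E] [DecidableEq V]

lemma lap_single (t h : E → V) (v : V) :
    lap t h (Finsupp.single v 1) =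
      ∑ e : E, if t e = v then Finsupp.single (h e) 1 - Finsupp.single v 1 else 0 := by
  simp [lap]

lemma sigmaMap_single (t : E → V) (v : V) :
    sigmaMap t (Finsupp.single v 1) = ∑ e : E, if t e = v then Finsupp.single e 1 else 0 := by
  simp [sigmaMap]

lemma phiMod_single_self (t h : E → V) (w : V) :
    phiMod t h w (Finsupp.single w 1) = Finsupp.single w 1 := by
  simp [phiMod]

lemma phiMod_single_of_ne (t h : E → V) {v w : V} (hv : v ≠ w) :
    phiMod t h w (Finsupp.single v 1) = lap t h (Finsupp.single v 1) := by
  simp [phiMod, hv]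

variable [DecidableEq E]

lemma sum_lineEdge_ite_fst_eq {M : Type*} [AddCommMonoid M] (t h : E → V) (e : E) (g : E → M) :
    ∑ p : LineEdge t h, (if p.1.1 = e then g p.1.2 else 0) =
      ∑ f : E, if t f = h e then g f else 0 := by
  show ∑ p : {p : E × E // h p.1 = t p.2}, (if p.1.1 = e then g p.1.2 else 0) = _
  rw [← Finset.sum_subtype (Finset.univ.filter fun p : E × E => h p.1 = t p.2) (by simp)
    (fun p : E × E => if p.1 = e then g p.2 else 0), Finset.sum_filter, Fintype.sum_prod_type,
    Finset.sum_eq_single e (fun a _ hne => by simp [hne]) (by simp)]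
  simp [eq_comm]

lemma lap_lineGraph_single (t h : E → V) (e : E) :
    lap (fun p : LineEdge t h => p.1.1) (fun p : LineEdge t h => p.1.2) (Finsupp.single e 1) =
      sigmaMap t (Finsupp.single (h e) 1) - (outdeg t (h e) : ℤ) • Finsupp.single e 1 := by
  have hsplit : ∀ p : LineEdge t h,
      (if p.1.1 = e then Finsupp.single p.1.2 (1 : ℤ) - Finsupp.single e 1 else 0) =
        (if p.1.1 = e then Finsupp.single p.1.2 1 else 0) -
          if p.1.1 = e then Finsupp.single e 1 else 0 := fun p => by
    split_ifs <;> simp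
  rw [lap_single, Finset.sum_congr rfl fun p _ => hsplit p, Finset.sum_sub_distrib,
    sum_lineEdge_ite_fst_eq t h e fun f => Finsupp.single f 1,
    sum_lineEdge_ite_fst_eq t h e fun _ => Finsupp.single e 1, sigmaMap_single]
  congr 1
  rw [← Finset.sum_filter, Finset.sum_const, outdeg, natCast_zsmul]

lemma sigmaMap_tau_single_sub_smul_mem_range (t h : E → V) (estar : E) (k : ℕ)
    (hreg : ∀ v : V, outdeg t v = k) (e : E) :
    sigmaMap t (tau h estar (Finsupp.single e 1)) - (k : ℤ) • Finsupp.single e 1 ∈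
      LinearMap.range
        (phiMod (fun p : LineEdge t h => p.1.1) (fun p : LineEdge t h => p.1.2) estar) := by
  by_cases he : e = estar
  · subst he
    refine ⟨-(k : ℤ) • Finsupp.single e 1, ?_⟩
    rw [map_smul, phiMod_single_self, tau_single_self, map_zero, zero_sub, neg_smul]
  · refine ⟨Finsupp.single e 1, ?_⟩
    rw [phiMod_single_of_ne _ _ he, lap_lineGraph_single, tau_single_of_ne h he, hreg]

lemma mkQ_comp_sigmaMap_comp_tau (t h : E → V) (estar : E) (k : ℕ)
    (hreg : ∀ v : V, outdeg t v = k) :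
    (LinearMap.range (phiMod (fun p : LineEdge t h => p.1.1)
        (fun p : LineEdge t h => p.1.2) estar)).mkQ ∘ₗ sigmaMap t ∘ₗ tau h estar =
      (k : ℤ) • (LinearMap.range (phiMod (fun p : LineEdge t h => p.1.1)
        (fun p : LineEdge t h => p.1.2) estar)).mkQ := by
  refine Finsupp.lhom_ext' fun e => LinearMap.ext_ring ?_
  simpa [← Submodule.Quotient.mk_smul, Submodule.Quotient.eq] using
    sigmaMap_tau_single_sub_smul_mem_range t h estar k hreg e

end LineGraph

theorem sigma_bar_comp_tau_bar_eq_smul_k_general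
    {V E : Type*} [Fintype E] [DecidableEq V] [DecidableEq E]
    (t h : E → V) (estar : E) (k : ℕ)
    (hreg : ∀ v : V, outdeg t v = k) :
    ∀ (τbar : ((E →₀ ℤ) ⧸ LinearMap.range
          (phiMod (fun p : LineEdge t h => p.1.1) (fun p : LineEdge t h => p.1.2) estar)) →ₗ[ℤ]
        ((V →₀ ℤ) ⧸ LinearMap.range (psi t h estar)))
      (σbar : ((V →₀ ℤ) ⧸ LinearMap.range (psi t h estar)) →ₗ[ℤ]
        ((E →₀ ℤ) ⧸ LinearMap.range
          (phiMod (fun p : LineEdge t h => p.1.1) (fun p : LineEdge t h => p.1.2) estar))),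
      (∀ x : E →₀ ℤ,
        τbar (Submodule.Quotient.mk x) = Submodule.Quotient.mk (tau h estar x)) →
      (∀ y : V →₀ ℤ,
        σbar (Submodule.Quotient.mk y) = Submodule.Quotient.mk (sigmaMap t y)) →
      (∀ z, σbar (τbar z) = (k : ℤ) • z) ∧
      (∀ e : E,
        (Submodule.Quotient.mk (sigmaMap t (tau h estar (Finsupp.single e 1))) :
          (E →₀ ℤ) ⧸ LinearMap.range
            (phiMod (fun p : LineEdge t h => p.1.1) (fun p : LineEdge t h => p.1.2) estar)) =
          (k : ℤ) • Submodule.Quotient.mk (Finsupp.single e 1)) := by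
  intro τbar σbar hτ hσ
  have hcomp := LinearMap.congr_fun (mkQ_comp_sigmaMap_comp_tau t h estar k hreg)
  refine ⟨fun z => ?_, fun e => hcomp (Finsupp.single e 1)⟩
  obtain ⟨x, rfl⟩ := Submodule.Quotient.mk_surjective _ z
  rw [hτ, hσ]
  exact hcomp x

/-- for a `k`-out-regular graph, `σ̄ ∘ τ̄` is multiplication by `k`
on `K(𝓛G, e*)`; in particular the class of `σ(τ(e))` equals `k` times the class
of `e` for every edge `e`. -/
theorem sigma_bar_comp_tau_bar_eq_smul_k
    {V E : Type*} [Fintype E] [DecidableEq V] [DecidableEq E]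
    (t h : E → V) (estar : E) (k : ℕ) (hk : 0 < k)
    (hreg : ∀ v : V, outdeg t v = k) :
    ∀ (τbar : ((E →₀ ℤ) ⧸ LinearMap.range
          (phiMod (fun p : LineEdge t h => p.1.1) (fun p : LineEdge t h => p.1.2) estar)) →ₗ[ℤ]
        ((V →₀ ℤ) ⧸ LinearMap.range (psi t h estar)))
      (σbar : ((V →₀ ℤ) ⧸ LinearMap.range (psi t h estar)) →ₗ[ℤ]
        ((E →₀ ℤ) ⧸ LinearMap.range
          (phiMod (fun p : LineEdge t h => p.1.1) (fun p : LineEdge t h => p.1.2) estar))),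
      (∀ x : E →₀ ℤ,
        τbar (Submodule.Quotient.mk x) = Submodule.Quotient.mk (tau h estar x)) →
      (∀ y : V →₀ ℤ,
        σbar (Submodule.Quotient.mk y) = Submodule.Quotient.mk (sigmaMap t y)) →
      (∀ z, σbar (τbar z) = (k : ℤ) • z) ∧
      (∀ e : E,
        (Submodule.Quotient.mk (sigmaMap t (tau h estar (Finsupp.single e 1))) :
          (E →₀ ℤ) ⧸ LinearMap.range
            (phiMod (fun p : LineEdge t h => p.1.1) (fun p : LineEdge t h => p.1.2) estar)) =
          (k : ℤ) • Submodule.Quotient.mk (Finsupp.single e 1)) :=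
  sigma_bar_comp_tau_bar_eq_smul_k_general t h estar k hreg
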